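/- arXiv:1104.3299 — 3 statements merged into one kernel-verified Lean document; each statement's English description precedes it below -/
import Mathlib

section
/- Let p be a prime and m a natural number. For natural numbers k = k' + k'', set q = ⌊k/p^m⌋, q' = ⌊k'/p^m⌋, q'' = ⌊k''/p^m⌋. Then v_p(k!) + v_p(q'!) + v_p(q''!) ≥ v_p(k'!) + v_p(k''!) + v_p(q!), i.e. the rational number ⟨k,k'⟩ := (k!·q'!·q''!)/(k'!·k''!·q!) lies in Z_(p). -/
open Finset Nat in
private lemma key_sum (b m : ℕ) (d : ℕ → ℕ) (hd0 : ∀ j, b ≤ j → d j = 0) :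
    ∑ i ∈ Finset.Ico 1 b, d (m + i) ≤ ∑ i ∈ Finset.Ico 1 b, d i := by
  rcases Nat.eq_zero_or_pos b with hb | hb
  · simp [hb]
  calc ∑ i ∈ Finset.Ico 1 b, d (m + i)
      = ∑ j ∈ Finset.Ico (m + 1) (m + b), d j := by
        rw [Finset.sum_Ico_eq_sum_range, Finset.sum_Ico_eq_sum_range]
        have : m + b - (m + 1) = b - 1 := by omega
        rw [this]
        exact Finset.sum_congr rfl fun t _ => by rw [Nat.add_assoc]
    _ ≤ ∑ j ∈ Finset.Ico 1 (m + b), d j :=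
        Finset.sum_le_sum_of_subset (Finset.Ico_subset_Ico (by omega) le_rfl)
    _ = ∑ j ∈ Finset.Ico 1 b, d j + ∑ j ∈ Finset.Ico b (m + b), d j :=
        (Finset.sum_Ico_consecutive _ (by omega) (by omega)).symm
    _ = ∑ j ∈ Finset.Ico 1 b, d j := by
        rw [Finset.sum_eq_zero fun j hj => hd0 j (Finset.mem_Ico.mp hj).1, Nat.add_zero]

theorem stmt2 (p m k' k'' : ℕ) (hp : p.Prime) :
    padicValNat p (k'.factorial) + padicValNat p (k''.factorial) +
        padicValNat p (((k' + k'') / p ^ m).factorial) ≤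
      padicValNat p ((k' + k'').factorial) + padicValNat p ((k' / p ^ m).factorial) +
        padicValNat p ((k'' / p ^ m).factorial) := by
  haveI : Fact p.Prime := ⟨hp⟩
  set k := k' + k'' with hk
  set b := Nat.log p k + 1 with hbdef
  have hp1 : 1 < p := hp.one_lt
  have hkb : k < p ^ b := Nat.lt_pow_succ_log_self hp1 k
  have hlog : ∀ n, n ≤ k → Nat.log p n < b := fun n hn =>
    Nat.lt_succ_of_le (Nat.log_mono_right hn)
  rw [padicValNat_factorial (hlog k' (Nat.le_add_right _ _)),
      padicValNat_factorial (hlog k'' (Nat.le_add_left _ _)),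
      padicValNat_factorial (hlog k (le_refl k)),
      padicValNat_factorial (hlog (k / p ^ m) (Nat.div_le_self _ _)),
      padicValNat_factorial (hlog (k' / p ^ m) (le_trans (Nat.div_le_self _ _) (Nat.le_add_right _ _))),
      padicValNat_factorial (hlog (k'' / p ^ m) (le_trans (Nat.div_le_self _ _) (Nat.le_add_left _ _)))]
  have hdiv : ∀ n i, n / p ^ m / p ^ i = n / p ^ (m + i) := fun n i => by
    rw [Nat.div_div_eq_div_mul, pow_add]
  simp only [hdiv]
  set d : ℕ → ℕ := fun j => k / p ^ j - (k' / p ^ j + k'' / p ^ j) with hd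
  have hle : ∀ j, k' / p ^ j + k'' / p ^ j ≤ k / p ^ j := fun j =>
    Nat.add_div_le_add_div _ _ _
  have hsum : ∀ j, k / p ^ j = k' / p ^ j + k'' / p ^ j + d j := fun j => by
    have := hle j; simp only [hd]; omega
  have hd0 : ∀ j, b ≤ j → d j = 0 := fun j hj => by
    have hpj : k < p ^ j := lt_of_lt_of_le hkb (Nat.pow_le_pow_right (le_of_lt hp1) hj)
    simp only [hd, Nat.div_eq_of_lt hpj, Nat.zero_sub]
  have e1 : ∑ i ∈ Finset.Ico 1 b, k / p ^ i =
      ∑ i ∈ Finset.Ico 1 b, k' / p ^ i + ∑ i ∈ Finset.Ico 1 b, k'' / p ^ i +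
        ∑ i ∈ Finset.Ico 1 b, d i := by
    rw [← Finset.sum_add_distrib, ← Finset.sum_add_distrib]
    exact Finset.sum_congr rfl fun i _ => hsum i
  have e2 : ∑ i ∈ Finset.Ico 1 b, k / p ^ (m + i) =
      ∑ i ∈ Finset.Ico 1 b, k' / p ^ (m + i) + ∑ i ∈ Finset.Ico 1 b, k'' / p ^ (m + i) +
        ∑ i ∈ Finset.Ico 1 b, d (m + i) := by
    rw [← Finset.sum_add_distrib, ← Finset.sum_add_distrib]
    exact Finset.sum_congr rfl fun i _ => hsum (m + i)
  have hkey := key_sum b m d hd0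
  omega
end

section
/- Let (A, I, γ) be a divided power ring, p a prime, m a natural number, and x ∈ A with x^{p^m} ∈ I. For natural numbers k = k' + k'' with q = ⌊k/p^m⌋, q' = ⌊k'/p^m⌋, q'' = ⌊k''/p^m⌋, one has q'!·q''! · x^{⟨k'⟩}·x^{⟨k''⟩} = q! · x^{⟨k⟩}; equivalently, x^{⟨k'⟩}·x^{⟨k''⟩} = (q!/(q'! q''!)) · x^{⟨k⟩} whenever q!/(q'!q''!) makes sense in A. -/
/-!
Write `y = x ^ N` and split `k' = N q' + r'`, `k'' = N q'' + r''`. Then `r' + r'' = N c + r`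
with `r = (k' + k'') % N` and a carry `c = (r' + r'') / N`, so that `x ^ r' * x ^ r''` is
`x ^ r * y ^ c`. The product of divided powers gives `q'! q''! γ_{q'}(y) γ_{q''}(y) =
(q' + q'')! γ_{q'+q''}(y)`, and the carry is absorbed because `y ^ c = c! γ_c(y)`, which turns
this into `(q' + q'' + c)! γ_{q'+q''+c}(y)` with `q' + q'' + c = (k' + k'') / N`.
-/

open Nat

theorem Nat.add_div_eq_add_add_mod_add_mod_div (a b c : ℕ) :
    (a + b) / c = a / c + b / c + (a % c + b % c) / c := by
  rcases Nat.eq_zero_or_pos c with rfl | hc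
  · simp
  · conv_lhs => rw [← Nat.div_add_mod a c, ← Nat.div_add_mod b c]
    rw [show c * (a / c) + a % c + (c * (b / c) + b % c) = a % c + b % c + c * (a / c + b / c)
      by ring, Nat.add_mul_div_left _ _ hc, add_comm]

namespace DividedPowers

variable {A : Type*} [CommRing A] {I : Ideal A} (hI : DividedPowers I)

theorem factorial_mul_factorial_mul_dpow_mul_dpow {a : A} (ha : a ∈ I) (m n : ℕ) :
    (m ! : A) * n ! * (hI.dpow m a * hI.dpow n a) = (m + n)! * hI.dpow (m + n) a := by
  rw [hI.mul_dpow ha, Nat.choose_symm_add, ← Nat.add_choose_mul_factorial_mul_factorial m n]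
  push_cast
  ring

theorem factorial_mul_dpow_mul_pow {a : A} (ha : a ∈ I) (m n : ℕ) :
    (m ! : A) * hI.dpow m a * a ^ n = (m + n)! * hI.dpow (m + n) a := by
  rw [← hI.factorial_mul_dpow_eq_pow ha, ← hI.factorial_mul_factorial_mul_dpow_mul_dpow ha]
  ring

/-- The partial divided power `x^{⟨k⟩}` of level `m`, for `N = p ^ m`. -/
def partialDpow (N : ℕ) (x : A) (k : ℕ) : A :=
  x ^ (k % N) * hI.dpow (k / N) (x ^ N)

theorem factorial_mul_factorial_mul_partialDpow_mul {N : ℕ} {x : A} (hx : x ^ N ∈ I)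
    (k' k'' : ℕ) :
    ((k' / N)! : A) * (k'' / N)! * (hI.partialDpow N x k' * hI.partialDpow N x k'') =
      ((k' + k'') / N)! * hI.partialDpow N x (k' + k'') := by
  set q' := k' / N
  set q'' := k'' / N
  set r' := k' % N
  set r'' := k'' % N
  have hdiv : (k' + k'') / N = q' + q'' + (r' + r'') / N :=
    Nat.add_div_eq_add_add_mod_add_mod_div k' k'' N
  have hmod : (k' + k'') % N = (r' + r'') % N := Nat.add_mod k' k'' N
  have hpow : x ^ r' * x ^ r'' = x ^ ((r' + r'') % N) * (x ^ N) ^ ((r' + r'') / N) := by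
    rw [← pow_add, ← pow_mul, ← pow_add, Nat.mod_add_div]
  unfold partialDpow
  rw [hdiv, hmod]
  calc ((q' ! : A) * q'' ! *
        (x ^ r' * hI.dpow q' (x ^ N) * (x ^ r'' * hI.dpow q'' (x ^ N))))
      = x ^ r' * x ^ r'' * (q' ! * q'' ! * (hI.dpow q' (x ^ N) * hI.dpow q'' (x ^ N))) := by
        ring
    _ = x ^ ((r' + r'') % N) *
          ((q' + q'')! * hI.dpow (q' + q'') (x ^ N) * (x ^ N) ^ ((r' + r'') / N)) := by
        rw [hpow, hI.factorial_mul_factorial_mul_dpow_mul_dpow hx]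
        ring
    _ = _ := by
        rw [hI.factorial_mul_dpow_mul_pow hx]
        ring

end DividedPowers

theorem stmt5_general {A : Type*} [CommRing A] {I : Ideal A} (hI : DividedPowers I)
    (p m : ℕ) (x : A) (hx : x ^ p ^ m ∈ I) (k' k'' : ℕ) :
    ((k' / p ^ m).factorial : A) * ((k'' / p ^ m).factorial : A) *
        (x ^ (k' % p ^ m) * hI.dpow (k' / p ^ m) (x ^ p ^ m) *
          (x ^ (k'' % p ^ m) * hI.dpow (k'' / p ^ m) (x ^ p ^ m))) =
      (((k' + k'') / p ^ m).factorial : A) *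
        (x ^ ((k' + k'') % p ^ m) * hI.dpow ((k' + k'') / p ^ m) (x ^ p ^ m)) :=
  hI.factorial_mul_factorial_mul_partialDpow_mul hx k' k''

theorem stmt5 {A : Type*} [CommRing A] {I : Ideal A} (hI : DividedPowers I)
    (p m : ℕ) (hp : p.Prime) (x : A) (hx : x ^ p ^ m ∈ I) (k' k'' : ℕ) :
    ((k' / p ^ m).factorial : A) * ((k'' / p ^ m).factorial : A) *
        (x ^ (k' % p ^ m) * hI.dpow (k' / p ^ m) (x ^ p ^ m) *
          (x ^ (k'' % p ^ m) * hI.dpow (k'' / p ^ m) (x ^ p ^ m))) =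
      (((k' + k'') / p ^ m).factorial : A) *
        (x ^ ((k' + k'') % p ^ m) * hI.dpow ((k' + k'') / p ^ m) (x ^ p ^ m)) :=
  stmt5_general hI p m x hx k' k''
end

section
/- Let p be a prime, m a natural number, and A a commutative ring with a divided power ideal (I, γ) such that p·A = 0. For x, y ∈ A with x^{p^m}, y^{p^m}, (x+y)^{p^m} ∈ I and γ compatible on these elements (e.g. A an m-PD ring with x, y in the m-PD ideal), and for any natural number k, one has (x+y)^{⟨k⟩} = Σ_{k'=0}^{k} ⟨k choose k'⟩ · x^{⟨k'⟩} · y^{⟨k−k'⟩}, where ⟨k choose k'⟩ denotes the image in A of the p-adic integer C(k,k')·⌊k'/p^m⌋!·⌊(k−k')/p^m⌋!/⌊k/p^m⌋!. -/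
/-!
In characteristic `p` we have `(x + y) ^ p ^ m = x ^ p ^ m + y ^ p ^ m`, so writing
`k = p ^ m * Q + r` with `r < p ^ m`, the binomial formula for `(x + y) ^ r` and the divided power
binomial formula for `γ_Q (x ^ p ^ m + y ^ p ^ m)` expand the left side as
`∑ C(r, c) x ^ ⟨p ^ m * a + c⟩ y ^ ⟨k - p ^ m * a - c⟩`. It remains to see that the
coefficient `⟨k choose k'⟩` is `C(r, k' mod p ^ m)` when adding the digits of `k'` and `k - k'`
produces no carry into position `m`, and vanishes otherwise. Up to a `p`-adic unit congruent to
`1` mod `p`, `(p ^ m * d + c)! = d! * c! * ((p ^ m)!) ^ d` for `c < p ^ m`; so without carry the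
coefficient is `C(r, c)` modulo `p`, and with a carry Legendre's formula produces an extra
factor `p`.
-/

open Nat

/-- `X / Y` is a `p`-adic unit congruent to `1` modulo `p`. -/
def PrincipalUnitEquiv (p X Y : ℕ) : Prop :=
  ∃ u v : ℕ, X * u = Y * v ∧ (u : ZMod p) = v ∧ (u : ZMod p) ≠ 0

namespace PrincipalUnitEquiv

variable {p X Y Z X' Y' : ℕ}

theorem symm (h : PrincipalUnitEquiv p X Y) : PrincipalUnitEquiv p Y X := by
  obtain ⟨u, v, hXY, huv, hu⟩ := h
  exact ⟨v, u, hXY.symm, huv.symm, huv ▸ hu⟩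

theorem cancel_right {c : ℕ} (hc : c ≠ 0) (h : PrincipalUnitEquiv p (X * c) (Y * c)) :
    PrincipalUnitEquiv p X Y := by
  obtain ⟨u, v, hXY, huv, hu⟩ := h
  refine ⟨u, v, Nat.eq_of_mul_eq_mul_right (Nat.pos_of_ne_zero hc) ?_, huv, hu⟩
  calc X * u * c = X * c * u := by ring
    _ = Y * c * v := hXY
    _ = Y * v * c := by ring

variable [Fact p.Prime]

theorem refl (X : ℕ) : PrincipalUnitEquiv p X X :=
  ⟨1, 1, rfl, rfl, by simp⟩

theorem of_eq (h : X = Y) : PrincipalUnitEquiv p X Y :=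
  h ▸ refl X

theorem mul (h : PrincipalUnitEquiv p X Y) (h' : PrincipalUnitEquiv p X' Y') :
    PrincipalUnitEquiv p (X * X') (Y * Y') := by
  obtain ⟨u, v, hXY, huv, hu⟩ := h
  obtain ⟨u', v', hXY', huv', hu'⟩ := h'
  refine ⟨u * u', v * v', ?_, by push_cast; rw [huv, huv'],
    by push_cast; exact mul_ne_zero hu hu'⟩
  calc X * X' * (u * u') = X * u * (X' * u') := by ring
    _ = Y * v * (Y' * v') := by rw [hXY, hXY']
    _ = Y * Y' * (v * v') := by ring

theorem trans (h : PrincipalUnitEquiv p X Y) (h' : PrincipalUnitEquiv p Y Z) :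
    PrincipalUnitEquiv p X Z := by
  obtain ⟨u, v, hXY, huv, hu⟩ := h
  obtain ⟨u', v', hYZ, huv', hu'⟩ := h'
  refine ⟨u * u', v * v', ?_, by push_cast; rw [huv, huv'],
    by push_cast; exact mul_ne_zero hu hu'⟩
  calc X * (u * u') = Y * u' * v := by rw [← mul_assoc, hXY]; ring
    _ = Z * (v * v') := by rw [hYZ]; ring

theorem padicValNat_eq (h : PrincipalUnitEquiv p X Y) (hY : Y ≠ 0) :
    padicValNat p X = padicValNat p Y := by
  obtain ⟨u, v, hXY, huv, hu⟩ := h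
  have hu0 : u ≠ 0 := by rintro rfl; simp at hu
  have hv0 : v ≠ 0 := by rintro rfl; simp [huv] at hu
  have hX : X ≠ 0 := by rintro rfl; simp [hY, hv0] at hXY
  have hvalu : padicValNat p u = 0 :=
    padicValNat.eq_zero_of_not_dvd ((ZMod.natCast_eq_zero_iff u p).not.mp hu)
  have hvalv : padicValNat p v = 0 :=
    padicValNat.eq_zero_of_not_dvd ((ZMod.natCast_eq_zero_iff v p).not.mp (huv ▸ hu))
  simpa [padicValNat.mul, hX, hY, hu0, hv0, hvalu, hvalv] using congrArg (padicValNat p) hXY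

theorem natCast_div_pow_eq (h : PrincipalUnitEquiv p X Y) (hY : Y ≠ 0) {e : ℕ}
    (he : e ≤ padicValNat p Y) : ((X / p ^ e : ℕ) : ZMod p) = ((Y / p ^ e : ℕ) : ZMod p) := by
  have hXe : p ^ e ∣ X :=
    Nat.pow_dvd_of_le_of_pow_dvd (h.padicValNat_eq hY ▸ he) pow_padicValNat_dvd
  have hYe : p ^ e ∣ Y := Nat.pow_dvd_of_le_of_pow_dvd he pow_padicValNat_dvd
  obtain ⟨u, v, hXY, huv, hu⟩ := h
  have hdiv : X / p ^ e * u = Y / p ^ e * v := by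
    rw [Nat.div_mul_right_comm hXe, Nat.div_mul_right_comm hYe, hXY]
  have hcast : ((X / p ^ e : ℕ) : ZMod p) * u = ((Y / p ^ e : ℕ) : ZMod p) * u := by
    rw [← Nat.cast_mul, huv, ← Nat.cast_mul, hdiv]
  exact mul_right_cancel₀ hu hcast

variable {m : ℕ}

/-- As `v_p(c) < m`, the quotient `(p ^ m * d + c) / c = 1 + p ^ m * d / c` is in `1 + pℤ_(p)`. -/
theorem pow_mul_add (d : ℕ) {c : ℕ} (hc0 : 0 < c) (hc : c < p ^ m) :
    PrincipalUnitEquiv p (p ^ m * d + c) c := by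
  have hp := (Fact.out : p.Prime)
  have hdvd : p ^ padicValNat p c ∣ c := pow_padicValNat_dvd
  have hndvd : ¬p ^ (padicValNat p c + 1) ∣ c := pow_succ_padicValNat_not_dvd hc0.ne'
  generalize padicValNat p c = e at hdvd hndvd
  have hem : e < m :=
    (Nat.pow_lt_pow_iff_right hp.one_lt).mp ((Nat.le_of_dvd hc0 hdvd).trans_lt hc)
  obtain ⟨c', hc'⟩ := hdvd
  have hc'0 : (c' : ZMod p) ≠ 0 := by
    rw [Ne, ZMod.natCast_eq_zero_iff]
    rintro ⟨w, rfl⟩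
    exact hndvd ⟨w, by rw [hc', pow_succ]; ring⟩
  refine ⟨c', p ^ (m - e) * d + c', ?_, ?_, hc'0⟩
  · have hm : p ^ m = p ^ e * p ^ (m - e) := by rw [← pow_add, Nat.add_sub_cancel' hem.le]
    rw [hm, hc']; ring
  · simp [Nat.sub_ne_zero_of_lt hem]

theorem factorial_pow_mul_add_split (d : ℕ) {c : ℕ} (hc : c < p ^ m) :
    PrincipalUnitEquiv p (p ^ m * d + c)! ((p ^ m * d)! * c !) := by
  induction c with
  | zero => exact of_eq (by simp)
  | succ c ih =>
    have := (ih (by omega)).mul (pow_mul_add (c := c + 1) d c.succ_pos hc)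
    rw [← add_assoc, Nat.factorial_succ, mul_comm]
    exact this.trans (of_eq (by rw [Nat.factorial_succ (n := c)]; ring))

theorem factorial_pow_mul_succ (n : ℕ) :
    PrincipalUnitEquiv p (p ^ m * (n + 1))! ((p ^ m * n)! * (p ^ m)! * (n + 1)) := by
  have hq : 0 < p ^ m := pow_pos (Fact.out : p.Prime).pos m
  have hsplit : p ^ m * (n + 1) - 1 = p ^ m * n + (p ^ m - 1) := by rw [Nat.mul_succ]; omega
  rw [← Nat.mul_factorial_pred (by positivity), hsplit]
  refine ((refl _).mul (factorial_pow_mul_add_split n (Nat.sub_lt hq one_pos))).trans (of_eq ?_)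
  rw [← Nat.mul_factorial_pred hq.ne']
  ring

theorem factorial_pow_mul (n : ℕ) :
    PrincipalUnitEquiv p (p ^ m * n)! (n ! * (p ^ m)! ^ n) := by
  induction n with
  | zero => exact of_eq (by simp)
  | succ n ih =>
    refine (factorial_pow_mul_succ n).trans ((ih.mul (refl _)).mul (refl _) |>.trans (of_eq ?_))
    rw [Nat.factorial_succ]; ring

theorem factorial_pow_mul_add (d : ℕ) {c : ℕ} (hc : c < p ^ m) :
    PrincipalUnitEquiv p (p ^ m * d + c)! (d ! * c ! * (p ^ m)! ^ d) :=
  (factorial_pow_mul_add_split d hc).trans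
    ((factorial_pow_mul d).mul (refl _) |>.trans (of_eq (by ring)))

theorem choose_mul_factorial {a s b t Q r : ℕ} (hs : s < p ^ m) (ht : t < p ^ m)
    (hr : r < p ^ m) (h : p ^ m * a + s + (p ^ m * b + t) = p ^ m * Q + r) :
    PrincipalUnitEquiv p
      ((p ^ m * a + s + (p ^ m * b + t)).choose (p ^ m * a + s) * a ! * b ! *
        (s ! * t ! * (p ^ m)! ^ (a + b)))
      (Q ! * r ! * (p ^ m)! ^ Q) := by
  have hk := factorial_pow_mul_add Q hr
  rw [← h, ← Nat.add_choose_mul_factorial_mul_factorial, ← Nat.choose_symm_add] at hk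
  refine .trans ?_ hk
  refine .trans (.of_eq (by ring)) (((refl _).mul
    (factorial_pow_mul_add a hs)).mul
    (factorial_pow_mul_add b ht)).symm

end PrincipalUnitEquiv

theorem Nat.add_low_digits_cases {q a s b t Q r : ℕ} (hs : s < q) (ht : t < q) (hr : r < q)
    (h : q * a + s + (q * b + t) = q * Q + r) :
    (s + t = r ∧ a + b = Q) ∨ (s + t = q + r ∧ a + b + 1 = Q) := by
  have hq : 0 < q := by omega
  have hdiv := congrArg (· / q) h
  have hmod := congrArg (· % q) h
  simp only [show q * a + s + (q * b + t) = q * (a + b) + (s + t) by ring, Nat.mul_add_div hq,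
    Nat.mul_add_mod, Nat.div_eq_of_lt hr, Nat.mod_eq_of_lt hr] at hdiv hmod
  rcases lt_or_ge (s + t) q with hst | hst
  · left
    rw [Nat.div_eq_of_lt hst] at hdiv
    rw [Nat.mod_eq_of_lt hst] at hmod
    omega
  · right
    have h1 : (s + t) / q = 1 := by rw [Nat.div_eq_iff hq]; omega
    have h2 : (s + t) % q = s + t - q := by rw [Nat.mod_eq_sub_mod hst, Nat.mod_eq_of_lt (by omega)]
    omega

/-- Legendre's formula: the carry in the `m`-th digit of `s + t` costs one factor `p`. -/
theorem padicValNat_factorial_add_lt {p : ℕ} [Fact p.Prime] {m s t r : ℕ} (hm : 1 ≤ m)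
    (hs : s < p ^ m) (ht : t < p ^ m) (hr : r < p ^ m) (hst : s + t = p ^ m + r) :
    padicValNat p s ! + padicValNat p t ! < padicValNat p r ! + padicValNat p (p ^ m)! := by
  have hp := (Fact.out : p.Prime)
  have hlog : ∀ n ≤ p ^ m, Nat.log p n < m + 1 := fun n hn =>
    Nat.lt_succ_of_le ((Nat.log_mono_right hn).trans (Nat.log_pow hp.one_lt m).le)
  rw [padicValNat_factorial (hlog s hs.le), padicValNat_factorial (hlog t ht.le),
    padicValNat_factorial (hlog r hr.le), padicValNat_factorial (hlog _ le_rfl),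
    ← Finset.sum_add_distrib, ← Finset.sum_add_distrib]
  apply Finset.sum_lt_sum
  · intro i hi
    have him : i ≤ m := Nat.lt_succ_iff.mp (Finset.mem_Ico.mp hi).2
    calc s / p ^ i + t / p ^ i ≤ (s + t) / p ^ i := Nat.div_add_div_le_add_div
      _ = (p ^ i * p ^ (m - i) + r) / p ^ i := by rw [hst, ← pow_add, Nat.add_sub_cancel' him]
      _ = r / p ^ i + p ^ m / p ^ i := by
        rw [Nat.mul_add_div (pow_pos hp.pos i), Nat.pow_div him hp.pos, add_comm]
  · refine ⟨m, Finset.mem_Ico.mpr ⟨hm, Nat.lt_succ_self m⟩, ?_⟩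
    rw [Nat.div_eq_of_lt hs, Nat.div_eq_of_lt ht, Nat.div_self (pow_pos hp.pos m)]
    exact Nat.succ_pos _

section Coefficient

variable {p : ℕ} [Fact p.Prime] {m a s b t Q r : ℕ}

theorem natCast_choose_mul_factorial_div_of_no_carry (hr : r < p ^ m) (hst : s + t = r)
    (hab : a + b = Q) :
    ((((p ^ m * a + s + (p ^ m * b + t)).choose (p ^ m * a + s) * a ! * b !) /
        p ^ padicValNat p Q ! : ℕ) : ZMod p) =
      r.choose s * ((Q ! / p ^ padicValNat p Q ! : ℕ) : ZMod p) := by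
  have h : p ^ m * a + s + (p ^ m * b + t) = p ^ m * Q + r := by rw [← hab, ← hst]; ring
  have hequiv : PrincipalUnitEquiv p
      ((p ^ m * a + s + (p ^ m * b + t)).choose (p ^ m * a + s) * a ! * b ! *
        (s ! * t ! * (p ^ m)! ^ Q))
      (Q ! * (s + t).choose s * (s ! * t ! * (p ^ m)! ^ Q)) := by
    convert PrincipalUnitEquiv.choose_mul_factorial (by omega) (by omega) hr h using 1
    · rw [hab]
    · rw [← hst, ← Nat.add_choose_mul_factorial_mul_factorial, ← Nat.choose_symm_add]; ring
  have hC : (s + t).choose s ≠ 0 := (Nat.choose_pos (by omega)).ne'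
  replace hequiv := hequiv.cancel_right (by positivity)
  rw [hequiv.natCast_div_pow_eq (mul_ne_zero (Nat.factorial_ne_zero Q) hC)
    (by rw [padicValNat.mul (Nat.factorial_ne_zero Q) hC]; omega),
    Nat.mul_div_right_comm pow_padicValNat_dvd, ← hst]
  push_cast
  ring

theorem natCast_choose_mul_factorial_div_of_carry (hs : s < p ^ m) (ht : t < p ^ m)
    (hr : r < p ^ m) (hst : s + t = p ^ m + r) (hab : a + b + 1 = Q) :
    ((((p ^ m * a + s + (p ^ m * b + t)).choose (p ^ m * a + s) * a ! * b !) /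
        p ^ padicValNat p Q ! : ℕ) : ZMod p) = 0 := by
  have h : p ^ m * a + s + (p ^ m * b + t) = p ^ m * Q + r := by rw [← hab]; linarith
  set N := ((p ^ m * a + s + (p ^ m * b + t)).choose (p ^ m * a + s) * a ! * b !)
  have hequiv : PrincipalUnitEquiv p (N * (s ! * t !) * (p ^ m)! ^ (a + b))
      ((a + b + 1)! * r ! * (p ^ m)! * (p ^ m)! ^ (a + b)) := by
    convert PrincipalUnitEquiv.choose_mul_factorial hs ht hr h using 1
    · ring
    · rw [← hab]; ring
  replace hequiv := (hequiv.cancel_right (by positivity)).padicValNat_eq (by positivity)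
  have hm : 1 ≤ m := Nat.one_le_iff_ne_zero.mpr <| by
    rintro rfl
    simp only [pow_zero] at hs ht hr hst
    omega
  have hlt := padicValNat_factorial_add_lt hm hs ht hr hst
  have hN : N ≠ 0 := mul_ne_zero (mul_ne_zero (Nat.choose_pos (by omega)).ne'
    (Nat.factorial_ne_zero a)) (Nat.factorial_ne_zero b)
  simp only [padicValNat.mul, hN, Nat.factorial_ne_zero, ne_eq, not_false_eq_true,
    mul_ne_zero_iff, and_self] at hequiv
  rw [ZMod.natCast_eq_zero_iff, ← hab]
  refine Nat.dvd_div_of_mul_dvd ?_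
  rw [← pow_succ, padicValNat_dvd_iff_le hN]
  omega

end Coefficient

theorem natCast_choose_mul_factorial_div {p : ℕ} [Fact p.Prime] (m : ℕ) {k k' : ℕ}
    (hk' : k' ≤ k) :
    (((k.choose k' * (k' / p ^ m)! * ((k - k') / p ^ m)!) /
        p ^ padicValNat p (k / p ^ m)! : ℕ) : ZMod p) =
      if k' % p ^ m ≤ k % p ^ m then
        ((k % p ^ m).choose (k' % p ^ m) : ZMod p) *
          (((k / p ^ m)! / p ^ padicValNat p (k / p ^ m)! : ℕ) : ZMod p)
      else 0 := by
  have hq : 0 < p ^ m := pow_pos (Fact.out : p.Prime).pos m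
  have hdigits : p ^ m * (k' / p ^ m) + k' % p ^ m +
      (p ^ m * ((k - k') / p ^ m) + (k - k') % p ^ m) = p ^ m * (k / p ^ m) + k % p ^ m := by
    rw [Nat.div_add_mod k', Nat.div_add_mod (k - k'), Nat.div_add_mod k]; omega
  have hlt : ∀ n, n % p ^ m < p ^ m := fun n => Nat.mod_lt n hq
  rcases Nat.add_low_digits_cases (hlt k') (hlt (k - k')) (hlt k) hdigits with
    ⟨hst, hab⟩ | ⟨hst, hab⟩
  · have := natCast_choose_mul_factorial_div_of_no_carry (hlt k) hst hab
    simp only [Nat.div_add_mod, Nat.add_sub_cancel' hk'] at this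
    rw [this, if_pos (Nat.le.intro hst)]
  · have := natCast_choose_mul_factorial_div_of_carry (hlt k') (hlt (k - k')) (hlt k) hst hab
    simp only [Nat.div_add_mod, Nat.add_sub_cancel' hk'] at this
    rw [this, if_neg (not_le.mpr (by linarith [hlt (k - k')]))]

theorem Finset.sum_range_succ_eq_sum_sum_of_mod_gt {M : Type*} [AddCommMonoid M] {q : ℕ}
    (hq : 0 < q) (k : ℕ) (f : ℕ → M) (hf : ∀ k' ≤ k, k % q < k' % q → f k' = 0) :
    ∑ k' ∈ Finset.range (k + 1), f k' =
      ∑ a ∈ Finset.range (k / q + 1), ∑ c ∈ Finset.range (k % q + 1), f (q * a + c) := by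
  have hr := Nat.mod_lt k hq
  rw [← Finset.sum_product', ← Finset.sum_image (g := fun ac : ℕ × ℕ => q * ac.1 + ac.2)]
  · symm
    apply Finset.sum_subset
    · intro k' hk'
      simp only [Finset.mem_image, Finset.mem_product, Finset.mem_range] at hk' ⊢
      obtain ⟨⟨a, c⟩, ⟨ha, hc⟩, rfl⟩ := hk'
      have := Nat.div_add_mod k q
      nlinarith
    · intro k' hk' hnot
      refine hf k' (Nat.lt_succ_iff.mp (Finset.mem_range.mp hk')) (not_le.mp fun hle => hnot ?_)
      refine Finset.mem_image.mpr ⟨(k' / q, k' % q), ?_, Nat.div_add_mod k' q⟩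
      simp only [Finset.mem_product, Finset.mem_range]
      exact ⟨Nat.lt_succ_of_le
        (Nat.div_le_div_right (Nat.lt_succ_iff.mp (Finset.mem_range.mp hk'))),
        Nat.lt_succ_of_le hle⟩
  · rintro ⟨a, c⟩ hac ⟨a', c'⟩ hac' h
    simp only [Finset.coe_product, Set.mem_prod, Finset.coe_range, Set.mem_Iio] at hac hac' h
    have hc : c < q := by omega
    have hc' : c' < q := by omega
    have h1 := congrArg (· / q) h
    have h2 := congrArg (· % q) h
    simp only [Nat.mul_add_div hq, Nat.div_eq_of_lt hc, Nat.div_eq_of_lt hc', Nat.mul_add_mod,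
      Nat.mod_eq_of_lt hc, Nat.mod_eq_of_lt hc', add_zero] at h1 h2
    rw [h1, h2]

theorem Nat.mul_add_digits_of_le {q k a c : ℕ} (hq : 0 < q) (ha : a ≤ k / q)
    (hc : c ≤ k % q) :
    q * a + c ≤ k ∧ (q * a + c) % q = c ∧ (q * a + c) / q = a ∧
      (k - (q * a + c)) % q = k % q - c ∧ (k - (q * a + c)) / q = k / q - a := by
  have hr := Nat.mod_lt k hq
  have hk := Nat.div_add_mod k q
  have hqa := Nat.mul_le_mul_left q ha
  have hsub : k - (q * a + c) = q * (k / q - a) + (k % q - c) := by rw [Nat.mul_sub]; omega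
  have hdigit {d e : ℕ} (he : e < q) : (q * d + e) % q = e ∧ (q * d + e) / q = d := by
    rw [Nat.mul_add_mod, Nat.mod_eq_of_lt he, Nat.mul_add_div hq, Nat.div_eq_of_lt he, add_zero]
    exact ⟨rfl, rfl⟩
  rw [hsub]
  exact ⟨by omega, (hdigit (hc.trans_lt hr)).1, (hdigit (hc.trans_lt hr)).2,
    hdigit ((Nat.sub_le _ c).trans_lt hr)⟩

theorem stmt15_general {A : Type*} [CommRing A] {I : Ideal A} (hI : DividedPowers I)
    (p m : ℕ) (hp : p.Prime) [CharP A p]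
    (x y : A) (hx : x ^ p ^ m ∈ I) (hy : y ^ p ^ m ∈ I)
    (k : ℕ) :
    (x + y) ^ (k % p ^ m) * hI.dpow (k / p ^ m) ((x + y) ^ p ^ m) =
      ∑ k' ∈ Finset.range (k + 1),
        (ZMod.castHom (dvd_refl p) A
            ((((k.choose k' * (k' / p ^ m).factorial * ((k - k') / p ^ m).factorial) /
                  p ^ padicValNat p (k / p ^ m).factorial : ℕ) : ZMod p) *
              ((((k / p ^ m).factorial / p ^ padicValNat p (k / p ^ m).factorial : ℕ) :
                  ZMod p))⁻¹)) *
          (x ^ (k' % p ^ m) * hI.dpow (k' / p ^ m) (x ^ p ^ m)) *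
          (y ^ ((k - k') % p ^ m) * hI.dpow ((k - k') / p ^ m) (y ^ p ^ m)) := by
  have : Fact p.Prime := ⟨hp⟩
  have hq : 0 < p ^ m := pow_pos hp.pos m
  have hunit : (((k / p ^ m)! / p ^ padicValNat p (k / p ^ m)! : ℕ) : ZMod p) ≠ 0 := by
    rw [← Nat.factorization_def _ hp, Ne, ZMod.natCast_eq_zero_iff]
    exact Nat.not_dvd_ordCompl hp (Nat.factorial_ne_zero _)
  rw [Finset.sum_range_succ_eq_sum_sum_of_mod_gt hq k _ fun k' hk' hgt => by
    rw [natCast_choose_mul_factorial_div m hk', if_neg (not_le.mpr hgt)]; simp]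
  rw [add_pow_char_pow, hI.dpow_add' hx hy, add_pow, Finset.sum_mul_sum, Finset.sum_comm]
  refine Finset.sum_congr rfl fun a ha => Finset.sum_congr rfl fun c hc => ?_
  have ha : a ≤ k / p ^ m := Nat.lt_succ_iff.mp (Finset.mem_range.mp ha)
  have hc : c ≤ k % p ^ m := Nat.lt_succ_iff.mp (Finset.mem_range.mp hc)
  obtain ⟨hle, hmod₁, hdiv₁, hmod₂, hdiv₂⟩ := Nat.mul_add_digits_of_le hq ha hc
  rw [natCast_choose_mul_factorial_div m hle, hmod₁, hdiv₁, hmod₂, hdiv₂, if_pos hc,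
    mul_inv_cancel_right₀ hunit, map_natCast]
  ring

theorem stmt15 {A : Type*} [CommRing A] {I : Ideal A} (hI : DividedPowers I)
    (p m : ℕ) (hp : p.Prime) [CharP A p]
    (x y : A) (hx : x ^ p ^ m ∈ I) (hy : y ^ p ^ m ∈ I) (hxy : (x + y) ^ p ^ m ∈ I)
    (k : ℕ) :
    (x + y) ^ (k % p ^ m) * hI.dpow (k / p ^ m) ((x + y) ^ p ^ m) =
      ∑ k' ∈ Finset.range (k + 1),
        (ZMod.castHom (dvd_refl p) A
            ((((k.choose k' * (k' / p ^ m).factorial * ((k - k') / p ^ m).factorial) /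
                  p ^ padicValNat p (k / p ^ m).factorial : ℕ) : ZMod p) *
              ((((k / p ^ m).factorial / p ^ padicValNat p (k / p ^ m).factorial : ℕ) :
                  ZMod p))⁻¹)) *
          (x ^ (k' % p ^ m) * hI.dpow (k' / p ^ m) (x ^ p ^ m)) *
          (y ^ ((k - k') % p ^ m) * hI.dpow ((k - k') / p ^ m) (y ^ p ^ m)) :=
  stmt15_general hI p m hp x y hx hy k
end
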